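/- arXiv:1310.3647 — 4 statements merged into one kernel-verified Lean document; each statement's English description precedes it below -/
import Mathlib

section
/- Let G be a finite group with abelian Sylow p-subgroup P. If N_G(P) = C_G(P), then G has a normal p-complement, i.e. G = O_{p'}(G) ⋊ P. -/
theorem burnside_normal_p_complement_general
    {G : Type*} [Group G] [Finite G] {p : ℕ} (hp : p.Prime) (P : Sylow p G)
    (hNC : Subgroup.normalizer ((P : Subgroup G) : Set G) =
      Subgroup.centralizer ((P : Subgroup G) : Set G)) :
    ∃ K : Subgroup G, K.Normal ∧ Nat.Coprime (Nat.card K) p ∧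
      Subgroup.IsComplement' K (P : Subgroup G) := by
  have : Fact p.Prime := ⟨hp⟩
  have hP := hNC.le
  refine ⟨(MonoidHom.transferSylow P hP).ker, MonoidHom.normal_ker _, ?_,
    MonoidHom.ker_transferSylow_isComplement' P hP⟩
  exact (hp.coprime_iff_not_dvd.mpr (MonoidHom.not_dvd_card_ker_transferSylow P hP)).symm

/-- Burnside's normal `p`-complement theorem: if a finite group `G` has an abelian
Sylow `p`-subgroup `P` with `N_G(P) = C_G(P)`, then `G` has a normal `p`-complement,
i.e. `G = O_{p'}(G) ⋊ P`. -/
theorem burnside_normal_p_complement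
    {G : Type*} [Group G] [Finite G] {p : ℕ} (hp : p.Prime) (P : Sylow p G)
    (hab : IsMulCommutative (P : Subgroup G))
    (hNC : Subgroup.normalizer ((P : Subgroup G) : Set G) =
      Subgroup.centralizer ((P : Subgroup G) : Set G)) :
    ∃ K : Subgroup G, K.Normal ∧ Nat.Coprime (Nat.card K) p ∧
      Subgroup.IsComplement' K (P : Subgroup G) :=
  burnside_normal_p_complement_general hp P hNC
end

section
/- Let G and H be finite groups with p dividing |H|, k algebraically closed of characteristic p, and M an indecomposable trivial source endo-trivial kG-module. Then M ⊗ k_H is an endo-trivial k[G×H]-module if and only if dim_k(M) = 1. -/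
universe u

open Representation

/-- A representation `ρ` of `G` on a `k`-vector space `V` is endo-trivial if
`End_k(V) ≅ k ⊕ (proj)` as `kG`-modules. -/
def IsEndoTrivial {k G V : Type u} [Field k] [Group G] [AddCommGroup V] [Module k V]
    (ρ : Representation k G V) : Prop :=
  ∃ (W : Type u) (_ : AddCommGroup W) (_ : Module (MonoidAlgebra k G) W),
    Module.Projective (MonoidAlgebra k G) W ∧
    Nonempty ((ρ.linHom ρ).asModule ≃ₗ[MonoidAlgebra k G]
      ((Representation.trivial k (G := G) (V := k)).asModule × W))

/-- A module is indecomposable if it is nonzero and admits no nontrivial direct sum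
decomposition. -/
def IsIndecomposableModule (R M : Type*) [Ring R] [AddCommGroup M] [Module R M] :
    Prop :=
  Nontrivial M ∧ ∀ N₁ N₂ : Submodule R M, IsCompl N₁ N₂ → N₁ = ⊥ ∨ N₂ = ⊥

/-- A `kG`-module has trivial source if it is a direct summand of a module induced from
the trivial module of some subgroup, i.e. of a permutation module `k[G ⧸ Q]`. -/
def HasTrivialSource {k G V : Type u} [Field k] [Group G] [AddCommGroup V] [Module k V]
    (ρ : Representation k G V) : Prop :=
  ∃ (Q : Subgroup G)
    (f : ρ.asModule →ₗ[MonoidAlgebra k G] (Representation.ofMulAction k G (G ⧸ Q)).asModule)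
    (g : (Representation.ofMulAction k G (G ⧸ Q)).asModule →ₗ[MonoidAlgebra k G] ρ.asModule),
      g.comp f = LinearMap.id


/-!
The subgroup `H` acts trivially on `End_k(M ⊗ k_H)`, hence on every direct summand `W` of it.
On such a `W` the norm element `N = ∑ h` of `H` acts as `|H| = 0`, and every `r ∈ k[G × H]`
with `N r = 0` has vanishing coefficient sums along the cosets of `H`, so it also acts as zero.
If `W` is projective, the coordinates of any `w ∈ W` in a free module containing `W` are such
elements, so `W = 0`. Thus `End_k(M) ≅ k`, i.e. `dim M = 1`; conversely, for `dim M = 1` the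
endomorphisms are scalars, on which `G × H` acts trivially.
-/

theorem Module.Projective.subsingleton_of_smul_eq_zero {R W : Type*} [Ring R] [AddCommGroup W]
    [Module R W] [Module.Projective R W] (N : R) (hN : ∀ w : W, N • w = 0)
    (hann : ∀ r : R, N * r = 0 → ∀ w : W, r • w = 0) : Subsingleton W := by
  obtain ⟨s, hs⟩ := Module.projective_def'.mp ‹Module.Projective R W›
  refine subsingleton_of_forall_eq 0 fun w => ?_
  have hsN : N • s w = 0 := by rw [← map_smul, hN, map_zero]
  have hw := LinearMap.congr_fun hs w
  rw [LinearMap.comp_apply, Finsupp.linearCombination_apply, LinearMap.id_apply] at hw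
  rw [← hw]
  exact Finset.sum_eq_zero fun m _ => hann _ (by simpa using congrArg (· m) hsN) m

namespace MonoidAlgebra

noncomputable def sndNorm (k G H : Type*) [Semiring k] [Monoid G] [Monoid H] [Fintype H] :
    MonoidAlgebra k (G × H) :=
  ∑ h : H, single (1, h) 1

variable {k : Type*} [Semiring k]

theorem coeff_mapDomain_fst {M N : Type*} [Fintype N] (r : MonoidAlgebra k (M × N)) (m : M) :
    (mapDomain Prod.fst r).coeff m = ∑ n : N, r.coeff (m, n) := by
  classical
  induction r using MonoidAlgebra.induction_linear with
  | zero => simp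
  | add r r' hr hr' =>
    rw [mapDomain_add, coeff_add, Finsupp.add_apply, hr, hr', ← Finset.sum_add_distrib]
    rfl
  | single x c =>
    obtain ⟨m₀, n₀⟩ := x
    by_cases hm : m₀ = m <;> simp [mapDomain_single, coeff_single, Finsupp.single_apply, hm]

theorem coeff_sndNorm_mul {G H : Type*} [Group G] [Group H] [Fintype H]
    (r : MonoidAlgebra k (G × H)) (g : G) :
    (sndNorm k G H * r).coeff (g, 1) = ∑ h : H, r.coeff (g, h) := by
  rw [sndNorm, Finset.sum_mul, coeff_sum, Finsupp.finsetSum_apply,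
    ← Equiv.sum_comp (Equiv.inv H)]
  simp

theorem mapDomain_fst_eq_zero_of_sndNorm_mul_eq_zero {G H : Type*} [Group G] [Group H]
    [Fintype H] {r : MonoidAlgebra k (G × H)} (hr : sndNorm k G H * r = 0) :
    mapDomain Prod.fst r = 0 := by
  ext g
  rw [coeff_mapDomain_fst, ← coeff_sndNorm_mul, hr]
  rfl

variable {G H W : Type*} [Monoid G] [Monoid H] [AddCommGroup W]
  [Module (MonoidAlgebra k (G × H)) W]

theorem smul_eq_mapDomain_fst_smul
    (htriv : ∀ (h : H) (w : W), single ((1 : G), h) (1 : k) • w = w)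
    (r : MonoidAlgebra k (G × H)) (w : W) :
    r • w = mapDomain (fun g => (g, (1 : H))) (mapDomain Prod.fst r) • w := by
  induction r using MonoidAlgebra.induction_linear with
  | zero => simp
  | add r r' hr hr' => rw [add_smul, hr, hr', mapDomain_add, mapDomain_add, add_smul]
  | single x c =>
    obtain ⟨g, h⟩ := x
    calc single (g, h) c • w = single (g, (1 : H)) c • single ((1 : G), h) (1 : k) • w := by
          rw [← mul_smul, single_mul_single]; simp
      _ = _ := by rw [htriv, mapDomain_single, mapDomain_single]

theorem sndNorm_smul [Fintype H] (hcard : (Fintype.card H : k) = 0)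
    (htriv : ∀ (h : H) (w : W), single ((1 : G), h) (1 : k) • w = w) (w : W) :
    sndNorm k G H • w = 0 := by
  rw [sndNorm, Finset.sum_smul]
  simp only [htriv, Finset.sum_const, Finset.card_univ]
  rw [← Nat.cast_smul_eq_nsmul (MonoidAlgebra k (G × H)), natCast_def, hcard, single_zero,
    zero_smul]

end MonoidAlgebra

open MonoidAlgebra in
theorem subsingleton_of_projective_of_snd_smul_eq_self {k G H W : Type*} [Ring k] [Group G]
    [Group H] [Fintype H] (hcard : (Fintype.card H : k) = 0) [AddCommGroup W]
    [Module (MonoidAlgebra k (G × H)) W] [Module.Projective (MonoidAlgebra k (G × H)) W]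
    (htriv : ∀ (h : H) (w : W), single ((1 : G), h) (1 : k) • w = w) : Subsingleton W :=
  Module.Projective.subsingleton_of_smul_eq_zero (sndNorm k G H) (sndNorm_smul hcard htriv)
    fun r hr w => by
      rw [smul_eq_mapDomain_fst_smul htriv, mapDomain_fst_eq_zero_of_sndNorm_mul_eq_zero hr,
        mapDomain_zero, zero_smul]

theorem LinearEquiv.smul_eq_self_of_prod {R M A W : Type*} [Semiring R] [AddCommMonoid M]
    [AddCommMonoid A] [AddCommMonoid W] [Module R M] [Module R A] [Module R W]
    (e : M ≃ₗ[R] A × W) {r : R} (hr : ∀ m : M, r • m = m) (w : W) : r • w = w := by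
  simpa [hr] using (congrArg Prod.snd (e.map_smul r (e.symm (0, w)))).symm

namespace Representation

theorem linHom_self_apply_eq_one_of_apply_eq_one {k G V : Type*} [CommSemiring k] [Group G]
    [AddCommMonoid V] [Module k V] (ρ : Representation k G V) {g : G} (hg : ρ g = 1) :
    ρ.linHom ρ g = 1 := by
  have hg' : ρ g⁻¹ = 1 := by simpa [hg] using (map_mul ρ g g⁻¹).symm
  ext f : 1
  rw [linHom_apply, hg, hg', Module.End.one_eq_id, LinearMap.comp_id,
    LinearMap.id_comp, Module.End.one_apply]

theorem linHom_self_apply_eq_one_of_finrank_eq_one {k G V : Type*} [Field k] [Group G]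
    [AddCommGroup V] [Module k V] (ρ : Representation k G V)
    (hV : Module.finrank k V = 1) (g : G) : ρ.linHom ρ g = 1 := by
  ext f : 1
  obtain ⟨c, rfl⟩ := (f.existsUnique_eq_smul_id_of_finrank_eq_one hV).exists
  rw [linHom_apply, LinearMap.smul_comp, LinearMap.id_comp, LinearMap.comp_smul,
    ← Module.End.mul_eq_comp, ← map_mul, mul_inv_cancel, map_one, Module.End.one_eq_id,
    Module.End.one_apply]

end Representation

noncomputable def Representation.Equiv.asModuleEquiv {k G V W : Type*} [CommSemiring k] [Monoid G]
    [AddCommMonoid V] [AddCommMonoid W] [Module k V] [Module k W] {ρ : Representation k G V}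
    {σ : Representation k G W} (φ : ρ.Equiv σ) :
    ρ.asModule ≃ₗ[MonoidAlgebra k G] σ.asModule :=
  .ofLinearMap (IntertwiningMap.equivLinearMapAsModule ρ σ φ.toIntertwiningMap)
    (IntertwiningMap.equivLinearMapAsModule σ ρ φ.symm.toIntertwiningMap)
    (LinearMap.ext φ.apply_symm_apply) (LinearMap.ext φ.symm_apply_apply)

theorem isEndoTrivial_of_finrank_eq_one {k G V : Type u} [Field k] [Group G] [AddCommGroup V]
    [Module k V] (ρ : Representation k G V) (hV : Module.finrank k V = 1) : IsEndoTrivial ρ := by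
  have : FiniteDimensional k V := Module.finite_of_finrank_eq_succ hV
  obtain ⟨φ⟩ := Module.nonempty_linearEquiv_of_finrank_eq_one (R := k) (M := V →ₗ[k] V)
    (by rw [Module.finrank_linearMap, hV])
  let ψ : (trivial k G k).Equiv (ρ.linHom ρ) :=
    .mk φ fun g => by rw [linHom_self_apply_eq_one_of_finrank_eq_one ρ hV]; rfl
  exact ⟨PUnit, inferInstance, inferInstance, inferInstance,
    ⟨ψ.symm.asModuleEquiv.trans (LinearEquiv.prodUnique).symm⟩⟩

open MonoidAlgebra in
theorem finrank_eq_one_of_isEndoTrivial {k G H V : Type u} [Field k] [Group G] [Group H]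
    [Fintype H] (hcard : (Fintype.card H : k) = 0) [AddCommGroup V] [Module k V]
    [FiniteDimensional k V] (σ : Representation k (G × H) V) (hσ : ∀ h : H, σ (1, h) = 1)
    (het : IsEndoTrivial σ) : Module.finrank k V = 1 := by
  obtain ⟨W, _, _, _, ⟨e⟩⟩ := het
  have htriv : ∀ (h : H) (w : W), single ((1 : G), h) (1 : k) • w = w := fun h =>
    e.smul_eq_self_of_prod fun f => by
      rw [single_smul, linHom_self_apply_eq_one_of_apply_eq_one σ (hσ h), one_smul]
      rfl
  have := subsingleton_of_projective_of_snd_smul_eq_self hcard htriv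
  have : Unique W := uniqueOfSubsingleton 0
  have hE := ((e.trans LinearEquiv.prodUnique).restrictScalars k).finrank_eq
  rw [(σ.linHom σ).asModuleEquiv.finrank_eq, (trivial k (G × H) k).asModuleEquiv.finrank_eq,
    Module.finrank_linearMap, Module.finrank_self] at hE
  exact Nat.eq_one_of_mul_eq_one_right hE

theorem ext_trivial_isEndoTrivial_iff_general {k G H : Type u} [Field k]
    {p : ℕ} [CharP k p] [Group G] [Group H] [Finite H]
    (hdvd : p ∣ Nat.card H)
    {V : Type u} [AddCommGroup V] [Module k V] [FiniteDimensional k V]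
    (ρ : Representation k G V) :
    IsEndoTrivial
        (Representation.tprod (MonoidHom.comp ρ (MonoidHom.fst G H))
          (MonoidHom.comp (Representation.trivial k (G := H) (V := k))
            (MonoidHom.snd G H))) ↔
      Module.finrank k V = 1 := by
  have := Fintype.ofFinite H
  have hcard : (Fintype.card H : k) = 0 := by
    rwa [CharP.cast_eq_zero_iff k p, ← Nat.card_eq_fintype_card]
  have hfinrank : Module.finrank k (TensorProduct k V k) = Module.finrank k V := by
    rw [Module.finrank_tensorProduct, Module.finrank_self, mul_one]
  rw [← hfinrank]
  refine ⟨finrank_eq_one_of_isEndoTrivial hcard _ fun h => ?_,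
    isEndoTrivial_of_finrank_eq_one _⟩
  ext
  simp [Representation.tprod_apply]

/-- Let `G` and `H` be finite groups with `p ∣ |H|`, `k` algebraically closed of
characteristic `p`, and `M` an indecomposable trivial source endo-trivial `kG`-module.
Then `M ⊗ k_H` is an endo-trivial `k[G×H]`-module if and only if `dim_k M = 1`. -/
theorem ext_trivial_isEndoTrivial_iff {k G H : Type u} [Field k] [IsAlgClosed k]
    {p : ℕ} (hp : p.Prime) [CharP k p] [Group G] [Group H] [Finite G] [Finite H]
    (hdvd : p ∣ Nat.card H)
    {V : Type u} [AddCommGroup V] [Module k V] [FiniteDimensional k V]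
    (ρ : Representation k G V)
    (hind : IsIndecomposableModule (MonoidAlgebra k G) ρ.asModule)
    (hts : HasTrivialSource ρ) (het : IsEndoTrivial ρ) :
    IsEndoTrivial
        (Representation.tprod (MonoidHom.comp ρ (MonoidHom.fst G H))
          (MonoidHom.comp (Representation.trivial k (G := H) (V := k))
            (MonoidHom.snd G H))) ↔
      Module.finrank k V = 1 :=
  ext_trivial_isEndoTrivial_iff_general hdvd ρ
end

section
/- Let G = H ⋊ P where H is the extraspecial group of order ℓ³ and exponent ℓ (ℓ an odd prime) with presentation ⟨a,b,c | a^ℓ = b^ℓ = c^ℓ = 1, [a,c] = [b,c] = 1, [a,b] = c⟩, and P = ⟨u⟩ × ⟨v⟩ ≅ C2 × C2 acts by: v acts trivially, a^u = a^{-1}, b^u = b^{-1}, c^u = c. Then N_G(P) = C_G(P) = Z(H) × P, where Z(H) = ⟨c⟩ ≅ C_ℓ. -/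
/-!
`c = [a, b]` is central, and it is nontrivial because an abelian group generated by two elements
of order `ℓ` has at most `ℓ²` elements. So `H` is a nonabelian group of order `ℓ³`, whose center
has order `ℓ` and is therefore `⟨c⟩`. The involution `u` inverts the abelian quotient
`H ⧸ ⟨c⟩`, which has odd exponent, so the elements of `H` fixed by `P` are exactly those of `⟨c⟩`.
Finally, in `H ⋊ P` with `P` abelian, `x` normalizes `P` iff `x.left` is fixed by `P` iff `x`
centralizes `P`.
-/

open scoped commutatorElement

open Subgroup

section Generators

variable {G : Type*} [Group G] {a b : G}

theorem mem_center_of_closure_pair_eq_top (hgen : closure {a, b} = ⊤) {z : G}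
    (ha : Commute a z) (hb : Commute b z) : z ∈ center G := by
  simp only [center_eq_iInf hgen, mem_iInf, Set.mem_insert_iff, Set.mem_singleton_iff,
    forall_eq_or_imp, forall_eq, mem_centralizer_singleton_iff]
  exact ⟨ha.eq.symm, hb.eq.symm⟩

theorem isMulCommutative_of_closure_pair_eq_top (hgen : closure {a, b} = ⊤)
    (hab : Commute a b) : IsMulCommutative G := by
  rw [← center_eq_top_iff, eq_top_iff, ← hgen, closure_le]
  refine Set.insert_subset_iff.mpr ⟨?_, Set.singleton_subset_iff.mpr ?_⟩
  · exact mem_center_of_closure_pair_eq_top hgen (Commute.refl a) hab.symm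
  · exact mem_center_of_closure_pair_eq_top hgen hab (Commute.refl b)

theorem MonoidHom.apply_eq_inv_of_closure_pair_eq_top {Q : Type*} [CommGroup Q]
    (hgen : closure {a, b} = ⊤) (f : G →* Q) (σ : G →* G)
    (ha : f (σ a) = (f a)⁻¹) (hb : f (σ b) = (f b)⁻¹) (x : G) : f (σ x) = (f x)⁻¹ := by
  have : f.comp σ = f⁻¹ :=
    MonoidHom.eq_of_eqOn_dense hgen (by rintro y (rfl | rfl) <;> assumption)
  exact DFunLike.congr_fun this x

end Generators

theorem CommGroup.card_le_sq_of_closure_pair_eq_top {C : Type*} [CommGroup C] {x y : C} {n : ℕ}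
    [NeZero n] (hx : x ^ n = 1) (hy : y ^ n = 1) (hgen : closure {x, y} = ⊤) :
    Nat.card C ≤ n ^ 2 := by
  have hpow : ∀ {z : C}, z ^ n = 1 → ∀ m : ℤ, z ^ ((m : ZMod n).val) = z ^ m := fun hz m => by
    rw [← zpow_natCast, ZMod.val_intCast, ← zpow_eq_zpow_emod' m hz]
  have hsurj : Function.Surjective fun p : ZMod n × ZMod n => x ^ p.1.val * y ^ p.2.val := by
    intro z
    obtain ⟨m, k, rfl⟩ := mem_closure_pair.mp (hgen ▸ mem_top z)
    exact ⟨(m, k), by simp only [hpow hx, hpow hy]⟩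
  calc Nat.card C ≤ Nat.card (ZMod n × ZMod n) := Nat.card_le_card_of_surjective _ hsurj
    _ = n ^ 2 := by simp [sq]

theorem not_commute_of_closure_pair_eq_top_of_sq_lt_card {G : Type*} [Group G] {a b : G} {n : ℕ}
    [NeZero n] (hgen : closure {a, b} = ⊤) (ha : a ^ n = 1) (hb : b ^ n = 1)
    (hcard : n ^ 2 < Nat.card G) : ¬Commute a b := by
  intro hab
  have := isMulCommutative_of_closure_pair_eq_top hgen hab
  let : CommGroup G := Group.commGroupOfCenterEqTop center_eq_top
  exact hcard.not_ge (CommGroup.card_le_sq_of_closure_pair_eq_top ha hb hgen)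

theorem eq_one_of_inv_eq_self_of_pow_odd {G : Type*} [Group G] {x : G} {n : ℕ} (hn : Odd n)
    (hx : x ^ n = 1) (hinv : x⁻¹ = x) : x = 1 := by
  obtain ⟨k, rfl⟩ := hn
  have hsq : x ^ 2 = 1 := by rw [sq]; nth_rewrite 1 [← hinv]; exact inv_mul_cancel x
  rwa [pow_succ, pow_mul, hsq, one_pow, one_mul] at hx

section PrimeCube

variable {G : Type*} [Group G] {p : ℕ} [Fact p.Prime]

theorem card_center_eq_of_card_eq_prime_pow_three (hG : Nat.card G = p ^ 3)
    (hG' : ¬IsMulCommutative G) : Nat.card (center G) = p := by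
  obtain ⟨k, hk0, hk⟩ := IsPGroup.card_center_eq_prime_pow hG (by norm_num)
  have hk3 : k ≤ 3 := by
    rw [← Nat.pow_dvd_pow_iff_le_right (Fact.out : p.Prime).one_lt, ← hk, ← hG]
    exact card_subgroup_dvd_card _
  obtain rfl | hk2 : k = 1 ∨ 2 ≤ k := by omega
  · simpa using hk
  refine absurd ?_ hG'
  have hquot : Nat.card (G ⧸ center G) ∣ p := by
    rw [← index_eq_card, ← Nat.mul_dvd_mul_iff_left (pow_pos (Fact.out : p.Prime).pos k), ← hk,
      card_mul_index, hG, hk, ← pow_succ]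
    exact pow_dvd_pow p (by omega)
  have := isCyclic_of_card_dvd_prime hquot
  exact isMulCommutative_of_isCyclic_quotient_center_self G

theorem center_eq_zpowers_of_card_eq_prime_pow_three (hG : Nat.card G = p ^ 3)
    (hG' : ¬IsMulCommutative G) {c : G} (hc : c ∈ center G) (hco : orderOf c = p) :
    center G = zpowers c :=
  have : Finite G := Nat.finite_of_card_ne_zero (hG ▸ (pow_pos (Fact.out : p.Prime).pos 3).ne')
  (eq_of_le_of_card_ge (zpowers_le.mpr hc) (by
    rw [Nat.card_zpowers, hco, card_center_eq_of_card_eq_prime_pow_three hG hG'])).symm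

-- Modulo the center `σ` inverts the generators of the abelian group `G ⧸ center G`, hence
-- inverts everything, and an element of odd order equal to its own inverse is trivial.
theorem mem_center_of_apply_eq_self (hG : Nat.card G = p ^ 3) (hG' : ¬IsMulCommutative G)
    (hodd : Odd p) (hexp : ∀ x : G, x ^ p = 1) {a b : G} (hgen : closure {a, b} = ⊤)
    (σ : G →* G) (ha : σ a = a⁻¹) (hb : σ b = b⁻¹) {x : G} (hx : σ x = x) : x ∈ center G := by
  have hQ : Nat.card (G ⧸ center G) = p ^ 2 := by
    have := card_mul_index (center G)
    rw [card_center_eq_of_card_eq_prime_pow_three hG hG', hG, index_eq_card] at this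
    exact (Nat.eq_of_mul_eq_mul_left (Fact.out : p.Prime).pos (by rw [this]; ring))
  let := IsPGroup.commGroupOfCardEqPrimeSq hQ
  have hinv := (QuotientGroup.mk' (center G)).apply_eq_inv_of_closure_pair_eq_top hgen σ
    (by rw [ha, map_inv]) (by rw [hb, map_inv]) x
  rw [hx] at hinv
  refine (QuotientGroup.eq_one_iff x).mp (eq_one_of_inv_eq_self_of_pow_odd hodd ?_ hinv.symm)
  rw [← QuotientGroup.mk_pow, hexp, QuotientGroup.mk_one]

end PrimeCube

namespace SemidirectProduct

variable {N G : Type*} [Group N] [CommGroup G] {φ : G →* MulAut N}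

theorem conj_inr_left (x : N ⋊[φ] G) (g : G) :
    (x * inr g * x⁻¹).left = x.left * (φ g x.left)⁻¹ := by
  simp only [mul_left, mul_right, left_inr, right_inr, inv_left, map_one, mul_one]
  rw [← MulAut.mul_apply, ← map_mul, mul_inv_cancel_comm, map_inv]

theorem apply_left_eq_of_mem_normalizer {x : N ⋊[φ] G}
    (hx : x ∈ normalizer ((inr : G →* N ⋊[φ] G).range : Set (N ⋊[φ] G))) (g : G) :
    φ g x.left = x.left := by
  obtain ⟨g', hg'⟩ := (mem_set_normalizer_iff.mp hx (inr g)).mp ⟨g, rfl⟩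
  have := congrArg left hg'
  rw [conj_inr_left, left_inr, eq_comm, mul_inv_eq_one] at this
  exact this.symm

theorem mem_centralizer_range_inr_of_apply_left_eq {x : N ⋊[φ] G}
    (hx : ∀ g, φ g x.left = x.left) :
    x ∈ centralizer ((inr : G →* N ⋊[φ] G).range : Set (N ⋊[φ] G)) := by
  rintro _ ⟨g, rfl⟩
  ext <;> simp [hx, mul_comm]

theorem normalizer_range_inr_eq_centralizer :
    normalizer ((inr : G →* N ⋊[φ] G).range : Set (N ⋊[φ] G)) =
      centralizer ((inr : G →* N ⋊[φ] G).range : Set (N ⋊[φ] G)) :=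
  le_antisymm (fun _ hx => mem_centralizer_range_inr_of_apply_left_eq
    (apply_left_eq_of_mem_normalizer hx)) (centralizer_le_normalizer _)

theorem centralizer_range_inr_eq {K : Subgroup N} (hK : ∀ n, n ∈ K ↔ ∀ g, φ g n = n) :
    centralizer ((inr : G →* N ⋊[φ] G).range : Set (N ⋊[φ] G)) =
      K.map inl ⊔ (inr : G →* N ⋊[φ] G).range := by
  apply le_antisymm
  · intro x hx
    have hxK : x.left ∈ K :=
      (hK _).mpr (apply_left_eq_of_mem_normalizer (centralizer_le_normalizer _ hx))
    rw [← inl_left_mul_inr_right x]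
    exact mul_mem (mem_sup_left (mem_map_of_mem _ hxK)) (mem_sup_right ⟨x.right, rfl⟩)
  · refine sup_le ?_ ?_
    · rintro _ ⟨n, hn, rfl⟩
      exact mem_centralizer_range_inr_of_apply_left_eq ((hK n).mp hn)
    · rintro _ ⟨g, rfl⟩
      exact mem_centralizer_range_inr_of_apply_left_eq (by simp)

end SemidirectProduct

theorem MonoidHom.eq_one_or_eq_of_map_inr_eq_one {M : Type*} [Monoid M]
    (f : Multiplicative (ZMod 2) × Multiplicative (ZMod 2) →* M)
    (hf : f (1, Multiplicative.ofAdd 1) = 1)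
    (q : Multiplicative (ZMod 2) × Multiplicative (ZMod 2)) :
    f q = 1 ∨ f q = f (Multiplicative.ofAdd 1, 1) := by
  have hz2 : ∀ x : Multiplicative (ZMod 2), x = 1 ∨ x = Multiplicative.ofAdd 1 := by decide
  have hsnd : f (1, q.2) = 1 := by
    rcases hz2 q.2 with h | h <;> rw [h]
    exacts [map_one f, hf]
  rw [← Prod.fst_mul_snd q, map_mul, hsnd, mul_one]
  rcases hz2 q.1 with h | h <;> rw [h]
  exacts [Or.inl (map_one f), Or.inr rfl]

theorem normalizer_eq_centralizer_extraspecial_semidirect_general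
    (ℓ : ℕ) (hℓ : ℓ.Prime) (hodd : Odd ℓ)
    (H : Type u) [Group H] [Fintype H] (a b c : H)
    (hcard : Fintype.card H = ℓ ^ 3)
    (hab : ⁅a, b⁆ = c) (hac : ⁅a, c⁆ = 1) (hbc : ⁅b, c⁆ = 1)
    (hgen : Subgroup.closure {a, b} = (⊤ : Subgroup H))
    (hexp : ∀ x : H, x ^ ℓ = 1)
    (φ : (Multiplicative (ZMod 2) × Multiplicative (ZMod 2)) →* MulAut H)
    (hva : φ (1, Multiplicative.ofAdd 1) = 1)
    (hua : φ (Multiplicative.ofAdd 1, 1) a = a⁻¹)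
    (hub : φ (Multiplicative.ofAdd 1, 1) b = b⁻¹)
    (huc : φ (Multiplicative.ofAdd 1, 1) c = c) :
    (Subgroup.normalizer ((SemidirectProduct.inr :
        (Multiplicative (ZMod 2) × Multiplicative (ZMod 2)) →*
          H ⋊[φ] (Multiplicative (ZMod 2) × Multiplicative (ZMod 2))).range : Set (H ⋊[φ] (Multiplicative (ZMod 2) × Multiplicative (ZMod 2)))) =
      Subgroup.centralizer
        ((SemidirectProduct.inr :
          (Multiplicative (ZMod 2) × Multiplicative (ZMod 2)) →*
            H ⋊[φ] (Multiplicative (ZMod 2) × Multiplicative (ZMod 2))).range : Set (H ⋊[φ] (Multiplicative (ZMod 2) × Multiplicative (ZMod 2))))) ∧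
    (Subgroup.centralizer
        ((SemidirectProduct.inr :
          (Multiplicative (ZMod 2) × Multiplicative (ZMod 2)) →*
            H ⋊[φ] (Multiplicative (ZMod 2) × Multiplicative (ZMod 2))).range : Set (H ⋊[φ] (Multiplicative (ZMod 2) × Multiplicative (ZMod 2)))) =
      (Subgroup.zpowers c).map SemidirectProduct.inl ⊔
        (SemidirectProduct.inr :
          (Multiplicative (ZMod 2) × Multiplicative (ZMod 2)) →*
            H ⋊[φ] (Multiplicative (ZMod 2) × Multiplicative (ZMod 2))).range) ∧
    Subgroup.center H = Subgroup.zpowers c ∧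
    orderOf c = ℓ := by
  have := Fact.mk hℓ
  have hcardH : Nat.card H = ℓ ^ 3 := by rw [Nat.card_eq_fintype_card, hcard]
  have hc1 : c ≠ 1 := hab ▸ mt commutatorElement_eq_one_iff_commute.mp
    (not_commute_of_closure_pair_eq_top_of_sq_lt_card hgen (hexp a) (hexp b)
      (hcardH ▸ Nat.pow_lt_pow_right hℓ.one_lt (by norm_num)))
  have hnc : ¬IsMulCommutative H := fun _ =>
    hc1 (hab ▸ commutatorElement_eq_one_iff_mul_comm.mpr (mul_comm' a b))
  have hcc : c ∈ center H := mem_center_of_closure_pair_eq_top hgen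
    (commutatorElement_eq_one_iff_commute.mp hac) (commutatorElement_eq_one_iff_commute.mp hbc)
  have horder : orderOf c = ℓ := orderOf_eq_prime (hexp c) hc1
  have hcenter := center_eq_zpowers_of_card_eq_prime_pow_three hcardH hnc hcc horder
  have hfix : ∀ h, h ∈ zpowers c ↔ ∀ q, φ q h = h := by
    intro h
    refine ⟨fun hh q => ?_, fun hh => hcenter ▸ mem_center_of_apply_eq_self hcardH hnc hodd hexp
      hgen (φ (Multiplicative.ofAdd 1, 1)).toMonoidHom hua hub (hh _)⟩
    obtain ⟨k, rfl⟩ := hh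
    rcases φ.eq_one_or_eq_of_map_inr_eq_one hva q with hq | hq <;> rw [hq]
    · rfl
    · rw [map_zpow, huc]
  exact ⟨SemidirectProduct.normalizer_range_inr_eq_centralizer,
    SemidirectProduct.centralizer_range_inr_eq hfix, hcenter, horder⟩

/-- Let `H` be the extraspecial group of order `ℓ³` and exponent `ℓ` (`ℓ` an odd
prime), generated by `a, b` with `c = [a,b]` central and all generators of order `ℓ`,
and let the Klein four-group `P = ⟨u⟩ × ⟨v⟩` act on `H` by: `v` acts trivially,
`a^u = a⁻¹`, `b^u = b⁻¹`, `c^u = c`.  Then in `G = H ⋊ P` one has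
`N_G(P) = C_G(P) = Z(H) × P`, where `Z(H) = ⟨c⟩ ≅ C_ℓ`. -/
theorem normalizer_eq_centralizer_extraspecial_semidirect
    (ℓ : ℕ) (hℓ : ℓ.Prime) (hodd : Odd ℓ)
    (H : Type u) [Group H] [Fintype H] (a b c : H)
    (hcard : Fintype.card H = ℓ ^ 3)
    (ha : a ^ ℓ = 1) (hb : b ^ ℓ = 1) (hc : c ^ ℓ = 1)
    (hab : ⁅a, b⁆ = c) (hac : ⁅a, c⁆ = 1) (hbc : ⁅b, c⁆ = 1)
    (hgen : Subgroup.closure {a, b} = (⊤ : Subgroup H))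
    (hexp : ∀ x : H, x ^ ℓ = 1)
    (φ : (Multiplicative (ZMod 2) × Multiplicative (ZMod 2)) →* MulAut H)
    (hva : φ (1, Multiplicative.ofAdd 1) = 1)
    (hua : φ (Multiplicative.ofAdd 1, 1) a = a⁻¹)
    (hub : φ (Multiplicative.ofAdd 1, 1) b = b⁻¹)
    (huc : φ (Multiplicative.ofAdd 1, 1) c = c) :
    (Subgroup.normalizer ((SemidirectProduct.inr :
        (Multiplicative (ZMod 2) × Multiplicative (ZMod 2)) →*
          H ⋊[φ] (Multiplicative (ZMod 2) × Multiplicative (ZMod 2))).range : Set (H ⋊[φ] (Multiplicative (ZMod 2) × Multiplicative (ZMod 2)))) =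
      Subgroup.centralizer
        ((SemidirectProduct.inr :
          (Multiplicative (ZMod 2) × Multiplicative (ZMod 2)) →*
            H ⋊[φ] (Multiplicative (ZMod 2) × Multiplicative (ZMod 2))).range : Set (H ⋊[φ] (Multiplicative (ZMod 2) × Multiplicative (ZMod 2))))) ∧
    (Subgroup.centralizer
        ((SemidirectProduct.inr :
          (Multiplicative (ZMod 2) × Multiplicative (ZMod 2)) →*
            H ⋊[φ] (Multiplicative (ZMod 2) × Multiplicative (ZMod 2))).range : Set (H ⋊[φ] (Multiplicative (ZMod 2) × Multiplicative (ZMod 2)))) =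
      (Subgroup.zpowers c).map SemidirectProduct.inl ⊔
        (SemidirectProduct.inr :
          (Multiplicative (ZMod 2) × Multiplicative (ZMod 2)) →*
            H ⋊[φ] (Multiplicative (ZMod 2) × Multiplicative (ZMod 2))).range) ∧
    Subgroup.center H = Subgroup.zpowers c ∧
    orderOf c = ℓ :=
  normalizer_eq_centralizer_extraspecial_semidirect_general ℓ hℓ hodd H a b c hcard hab hac hbc hgen
    hexp φ hva hua hub huc
end

section
/- With G = H ⋊ P as above (H extraspecial of order ℓ³ and exponent ℓ, P ≅ C2 × C2 acting with v trivial and u inverting a and b), the 2'-part of the abelianization of G is trivial, while the 2'-part of the abelianization of N_G(P) = Z(H) × P is cyclic of order ℓ. -/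
universe u

open scoped commutatorElement

/-! The automorphism `u` inverts the generators `a, b` of `H`, and conjugation by `u` becomes
trivial in `(H ⋊ P)ᵃᵇ`, so there the image of each generator equals its own inverse; having odd
order, it is trivial. Hence `(H ⋊ P)ᵃᵇ` is a quotient of `P` and has exponent `2`.

An element `h q` normalizes `P` iff `h` is fixed by `P`. Since `u` acts as inversion on the
abelian group `H ⧸ ⟨c⟩` of odd exponent, the fixed points are exactly `⟨c⟩`, so `N_G(P)` is the
abelian group `⟨c⟩ × P` and the odd part of its abelianization is `⟨c⟩`. Finally `c ≠ 1`, for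
otherwise `H` would be abelian on two generators of order `ℓ`, of order at most `ℓ²`. -/

/-- The `p'`-part of a commutative group: the subgroup of elements whose order is
coprime to `p`. -/
def pPrimePart (A : Type*) [CommGroup A] (p : ℕ) : Subgroup A where
  carrier := {x | Nat.Coprime (orderOf x) p}
  one_mem' := by simp [Nat.Coprime]
  mul_mem' := by
    intro a b ha hb
    exact Nat.Coprime.coprime_dvd_left
      ((Commute.all a b).orderOf_mul_dvd_mul_orderOf) (Nat.Coprime.mul ha hb)
  inv_mem' := by
    intro a ha
    simpa using ha

theorem pPrimePart_le_ker {A B : Type*} [CommGroup A] [Group B] {p : ℕ} (f : A →* B)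
    (hB : ∀ y : B, y ^ p = 1) : pPrimePart A p ≤ f.ker := fun x hx =>
  orderOf_eq_one_iff.mp <| Nat.eq_one_of_dvd_coprimes hx
    (orderOf_map_dvd f x) (orderOf_dvd_of_pow_eq_one (hB (f x)))

theorem pPrimePart_eq_bot_of_forall_pow_eq_one {A : Type*} [CommGroup A] {p : ℕ}
    (hA : ∀ x : A, x ^ p = 1) : pPrimePart A p = ⊥ := by
  simpa using pPrimePart_le_ker (MonoidHom.id A) hA

theorem eq_one_of_inv_eq_self_of_pow_eq_one {G : Type*} [Group G] {x : G} {m : ℕ}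
    (hx : x⁻¹ = x) (hm : Odd m) (hxm : x ^ m = 1) : x = 1 := by
  obtain ⟨k, rfl⟩ := hm
  rwa [pow_succ, pow_mul, sq, inv_eq_iff_mul_eq_one.mp hx, one_pow, one_mul] at hxm

section Group

variable {G : Type*} [Group G]

theorem isMulCommutative_of_closure_eq_top {S : Set G}
    (hS : Subgroup.closure S = ⊤) (hcomm : ∀ x ∈ S, ∀ y ∈ S, x * y = y * x) :
    IsMulCommutative G := by
  have := Subgroup.isMulCommutative_closure hcomm
  rw [hS] at this
  exact .of_comm fun x y =>
    congrArg Subtype.val (mul_comm' (⟨x, trivial⟩ : (⊤ : Subgroup G)) ⟨y, trivial⟩)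

theorem Abelianization.of_injective [IsMulCommutative G] :
    Function.Injective (of : G →* Abelianization G) := by
  rw [← MonoidHom.ker_eq_bot_iff, ker_of, commutator_eq_bot_iff_center_eq_top,
    Subgroup.center_eq_top]

theorem Subgroup.mem_center_of_closure_eq_top {S : Set G} (hS : closure S = ⊤) {z : G}
    (hz : ∀ s ∈ S, s * z = z * s) : z ∈ center G := by
  rwa [← centralizer_univ, ← coe_top, ← hS, centralizer_closure]

theorem Subgroup.normal_zpowers_of_mem_center {z : G} (hz : z ∈ center G) :
    (zpowers z).Normal :=
  ⟨fun n hn g => by rwa [mem_center_iff.mp (zpowers_le.mpr hz hn) g, mul_inv_cancel_right]⟩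

open scoped Pointwise in
theorem natCard_le_orderOf_mul_orderOf [IsMulCommutative G] {a b : G}
    (hgen : Subgroup.closure {a, b} = ⊤) : Nat.card G ≤ orderOf a * orderOf b := by
  have hprod : ((Subgroup.zpowers a : Set G) * (Subgroup.zpowers b : Set G)) = Set.univ := by
    rw [← Subgroup.mul_normal, Subgroup.zpowers_eq_closure, Subgroup.zpowers_eq_closure,
      ← Subgroup.closure_union, ← Set.insert_eq, hgen, Subgroup.coe_top]
  calc Nat.card G = Nat.card ((Subgroup.zpowers a : Set G) * (Subgroup.zpowers b : Set G)) := by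
        rw [hprod, Nat.card_univ]
    _ ≤ _ := Set.natCard_mul_le
    _ = orderOf a * orderOf b := by
        simp only [SetLike.coe_sort_coe, Nat.card_zpowers]

theorem commutatorElement_ne_one_of_sq_lt_natCard {a b : G}
    (hgen : Subgroup.closure {a, b} = ⊤) {m : ℕ} (hm : 0 < m) (hexp : ∀ x : G, x ^ m = 1)
    (hcard : m ^ 2 < Nat.card G) : ⁅a, b⁆ ≠ 1 := by
  intro h
  have hab := commutatorElement_eq_one_iff_mul_comm.mp h
  have : IsMulCommutative G := isMulCommutative_of_closure_eq_top hgen <| by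
    rintro x (rfl | rfl) y (rfl | rfl) <;> first | rfl | exact hab | exact hab.symm
  have := natCard_le_orderOf_mul_orderOf hgen
  have := orderOf_le_of_pow_eq_one hm (hexp a)
  have := orderOf_le_of_pow_eq_one hm (hexp b)
  nlinarith

theorem isMulCommutative_quotient_zpowers_commutatorElement {a b : G}
    (hgen : Subgroup.closure {a, b} = ⊤) [(Subgroup.zpowers ⁅a, b⁆).Normal] :
    IsMulCommutative (G ⧸ Subgroup.zpowers ⁅a, b⁆) := by
  set π := QuotientGroup.mk' (Subgroup.zpowers ⁅a, b⁆)
  have hab : π a * π b = π b * π a := by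
    rw [← commutatorElement_eq_one_iff_mul_comm, ← map_commutatorElement,
      QuotientGroup.mk'_apply, QuotientGroup.eq_one_iff]
    exact Subgroup.mem_zpowers _
  refine isMulCommutative_of_closure_eq_top (S := {π a, π b}) ?_ ?_
  · rw [← Set.image_pair, ← MonoidHom.map_closure, hgen,
      Subgroup.map_top_of_surjective _ (QuotientGroup.mk'_surjective _)]
  · rintro x (rfl | rfl) y (rfl | rfl) <;> first | rfl | exact hab | exact hab.symm

open scoped IsMulCommutative in
theorem MulAut.mem_of_apply_eq_self_of_eqOn_inv {K : Subgroup G}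
    [K.Normal] [IsMulCommutative (G ⧸ K)] {S : Set G} (hS : Subgroup.closure S = ⊤)
    {σ : MulAut G} (hσ : ∀ s ∈ S, σ s = s⁻¹) {m : ℕ} (hm : Odd m) (hexp : ∀ x : G, x ^ m = 1)
    {x : G} (hx : σ x = x) : x ∈ K := by
  set π := QuotientGroup.mk' K
  have hπσ : π.comp σ.toMonoidHom = invMonoidHom.comp π :=
    MonoidHom.eq_of_eqOn_dense hS fun s hs => by simp [hσ s hs]
  have hinv : (π x)⁻¹ = π x := by
    simpa [hx] using (DFunLike.congr_fun hπσ x).symm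
  rw [← QuotientGroup.eq_one_iff, ← QuotientGroup.mk'_apply]
  exact eq_one_of_inv_eq_self_of_pow_eq_one hinv hm (by rw [← map_pow, hexp, map_one])

end Group

namespace SemidirectProduct

variable {N G : Type*} [Group N] [Group G] {φ : G →* MulAut N}

theorem abelianization_of_inl_apply (g : G) (n : N) :
    Abelianization.of (inl (φ g n) : N ⋊[φ] G) = Abelianization.of (inl n) := by
  rw [inl_aut, map_mul, map_mul, mul_right_comm, ← map_mul, ← map_mul inr, mul_inv_cancel, map_one,
    map_one, one_mul]

theorem abelianization_of_inl_eq_one {S : Set N} (hS : Subgroup.closure S = ⊤) {g : G}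
    (hg : ∀ s ∈ S, φ g s = s⁻¹) {m : ℕ} (hm : Odd m) (hexp : ∀ n : N, n ^ m = 1) (n : N) :
    Abelianization.of (inl n : N ⋊[φ] G) = 1 := by
  suffices Subgroup.closure S ≤ (Abelianization.of.comp inl).ker from this (hS ▸ trivial)
  refine (Subgroup.closure_le _).mpr fun s hs => ?_
  have hinv := abelianization_of_inl_apply (φ := φ) g s
  rw [hg s hs, map_inv, map_inv] at hinv
  rw [SetLike.mem_coe, MonoidHom.mem_ker, MonoidHom.comp_apply]
  exact eq_one_of_inv_eq_self_of_pow_eq_one hinv hm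
    (by rw [← map_pow, ← map_pow, hexp, map_one, map_one])

theorem abelianization_pow_eq_one {p : ℕ}
    (hN : ∀ n : N, Abelianization.of (inl n : N ⋊[φ] G) = 1) (hG : ∀ g : G, g ^ p = 1)
    (x : Abelianization (N ⋊[φ] G)) : x ^ p = 1 := by
  induction x using QuotientGroup.induction_on with | H x => ?_
  rw [← inl_left_mul_inr_right x]
  change (Abelianization.of _) ^ p = 1
  rw [map_mul, hN, one_mul, ← map_pow, ← map_pow, hG, map_one, map_one]

theorem mem_range_inr_iff {x : N ⋊[φ] G} : x ∈ (inr : G →* N ⋊[φ] G).range ↔ x.left = 1 :=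
  ⟨by rintro ⟨g, rfl⟩; rfl, fun h => ⟨x.right, by ext <;> simp [h]⟩⟩

theorem inl_mem_normalizer_range_inr_iff {n : N} :
    inl n ∈ Subgroup.normalizer ((inr : G →* N ⋊[φ] G).range : Set (N ⋊[φ] G)) ↔
      ∀ g, φ g n = n := by
  have hconj : ∀ y : N ⋊[φ] G, (inl n * y * (inl n)⁻¹).left = n * y.left * φ y.right n⁻¹ := by
    intro y
    simp [mul_left, inv_left]
  simp only [Subgroup.mem_normalizer_iff, mem_range_inr_iff, hconj]
  constructor
  · intro h g
    have := (h (inr g)).mp rfl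
    simp only [left_inr, mul_one, right_inr, map_inv] at this
    exact (eq_of_mul_inv_eq_one this).symm
  · intro h y
    rw [map_inv, h, mul_inv_eq_one, mul_eq_left]

theorem mem_normalizer_range_inr_iff {x : N ⋊[φ] G} :
    x ∈ Subgroup.normalizer ((inr : G →* N ⋊[φ] G).range : Set (N ⋊[φ] G)) ↔
      ∀ g, φ g x.left = x.left := by
  rw [← inl_mem_normalizer_range_inr_iff,
    ← mul_mem_cancel_right (y := inl x.left)
      (Subgroup.le_normalizer (MonoidHom.mem_range.mpr ⟨x.right, rfl⟩)),
    inl_left_mul_inr_right]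

theorem isMulCommutative_normalizer_range_inr [IsMulCommutative G]
    (hfix : ∀ n₁ n₂ : N, (∀ g, φ g n₁ = n₁) → (∀ g, φ g n₂ = n₂) → n₁ * n₂ = n₂ * n₁) :
    IsMulCommutative (Subgroup.normalizer ((inr : G →* N ⋊[φ] G).range : Set (N ⋊[φ] G))) := by
  refine .of_comm fun ⟨x, hx⟩ ⟨y, hy⟩ => Subtype.ext ?_
  rw [mem_normalizer_range_inr_iff] at hx hy
  ext
  · simp only [Subgroup.coe_mul, mul_left, hx, hy]
    exact hfix _ _ hx hy
  · exact mul_comm' _ _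

end SemidirectProduct

theorem SemidirectProduct.pPrimePart_abelianization_normalizer_range_inr {N G : Type*} [Group N]
    [CommGroup G] {φ : G →* MulAut N} {p : ℕ}
    (hG : ∀ g : G, g ^ p = 1) {z : N} (hz : (orderOf z).Coprime p)
    (hfix : ∀ n : N, (∀ g, φ g n = n) ↔ n ∈ Subgroup.zpowers z) :
    ∃ y, pPrimePart (Abelianization (Subgroup.normalizer
        ((inr : G →* N ⋊[φ] G).range : Set (N ⋊[φ] G)))) p = Subgroup.zpowers y ∧
      orderOf y = orderOf z := by
  set K := Subgroup.normalizer ((inr : G →* N ⋊[φ] G).range : Set (N ⋊[φ] G))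
  have hK : ∀ x : N ⋊[φ] G, x ∈ K ↔ x.left ∈ Subgroup.zpowers z := fun x =>
    mem_normalizer_range_inr_iff.trans (hfix x.left)
  have : IsMulCommutative K := isMulCommutative_normalizer_range_inr fun n₁ n₂ h₁ h₂ => by
    obtain ⟨i, rfl⟩ := (hfix n₁).mp h₁
    obtain ⟨j, rfl⟩ := (hfix n₂).mp h₂
    exact (Commute.zpow_zpow_self z i j).eq
  let zK : K := ⟨inl z, (hK _).mpr (Subgroup.mem_zpowers z)⟩
  let f : Abelianization K →* G := Abelianization.lift (rightHom.comp K.subtype)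
  have horder : orderOf (Abelianization.of zK) = orderOf z := by
    rw [orderOf_injective _ Abelianization.of_injective, ← Subgroup.orderOf_coe,
      orderOf_injective _ inl_injective]
  have hker : f.ker = Subgroup.zpowers (Abelianization.of zK) := by
    refine le_antisymm (fun y hy => ?_) ((Subgroup.zpowers_le).mpr rfl)
    induction y using QuotientGroup.induction_on with | H x => ?_
    obtain ⟨k, hk⟩ := Subgroup.mem_zpowers_iff.mp ((hK x).mp x.2)
    have hr : (x : N ⋊[φ] G).right = 1 := hy
    have hx : x = zK ^ k := by
      rw [Subtype.ext_iff, SubgroupClass.coe_zpow, ← map_zpow, hk,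
        ← inl_left_mul_inr_right (x : N ⋊[φ] G), hr, map_one, mul_one, left_inl]
    exact ⟨k, (map_zpow Abelianization.of zK k).symm.trans (congrArg _ hx.symm)⟩
  refine ⟨Abelianization.of zK, le_antisymm (hker ▸ pPrimePart_le_ker f hG) ?_, horder⟩
  rw [Subgroup.zpowers_le]
  change (orderOf _).Coprime p
  rwa [horder]

theorem forall_apply_eq_self_iff_of_apply_snd_eq_one {H : Type*} [Group H]
    (φ : Multiplicative (ZMod 2) × Multiplicative (ZMod 2) →* MulAut H)
    (hv : φ (1, Multiplicative.ofAdd 1) = 1) (h : H) :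
    (∀ q, φ q h = h) ↔ φ (Multiplicative.ofAdd 1, 1) h = h := by
  refine ⟨fun hq => hq _, fun hu q => ?_⟩
  have hq : q = 1 ∨ q = (Multiplicative.ofAdd 1, 1) ∨ q = (1, Multiplicative.ofAdd 1) ∨
      q = (Multiplicative.ofAdd 1, 1) * (1, Multiplicative.ofAdd 1) := by
    revert q; decide
  rcases hq with rfl | rfl | rfl | rfl <;>
    simp only [map_one, map_mul, hv, mul_one, MulAut.one_apply, hu]

theorem pPrimePart_abelianization_extraspecial_semidirect_general
    (ℓ : ℕ) (hℓ : ℓ.Prime) (hodd : Odd ℓ)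
    (H : Type u) [Group H] [Fintype H] (a b c : H)
    (hcard : Fintype.card H = ℓ ^ 3)
    (hab : ⁅a, b⁆ = c) (hac : ⁅a, c⁆ = 1) (hbc : ⁅b, c⁆ = 1)
    (hgen : Subgroup.closure {a, b} = (⊤ : Subgroup H))
    (hexp : ∀ x : H, x ^ ℓ = 1)
    (φ : (Multiplicative (ZMod 2) × Multiplicative (ZMod 2)) →* MulAut H)
    (hva : φ (1, Multiplicative.ofAdd 1) = 1)
    (hua : φ (Multiplicative.ofAdd 1, 1) a = a⁻¹)
    (hub : φ (Multiplicative.ofAdd 1, 1) b = b⁻¹)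
    (huc : φ (Multiplicative.ofAdd 1, 1) c = c) :
    pPrimePart
        (Abelianization (H ⋊[φ] (Multiplicative (ZMod 2) × Multiplicative (ZMod 2)))) 2 =
      ⊥ ∧
    IsCyclic
      (pPrimePart
        (Abelianization
          (Subgroup.normalizer ((SemidirectProduct.inr :
              (Multiplicative (ZMod 2) × Multiplicative (ZMod 2)) →*
                H ⋊[φ] (Multiplicative (ZMod 2) × Multiplicative (ZMod 2))).range :
              Set (H ⋊[φ] (Multiplicative (ZMod 2) × Multiplicative (ZMod 2))))))
        2) ∧
    Nat.card
      (pPrimePart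
        (Abelianization
          (Subgroup.normalizer ((SemidirectProduct.inr :
              (Multiplicative (ZMod 2) × Multiplicative (ZMod 2)) →*
                H ⋊[φ] (Multiplicative (ZMod 2) × Multiplicative (ZMod 2))).range :
              Set (H ⋊[φ] (Multiplicative (ZMod 2) × Multiplicative (ZMod 2))))))
        2) = ℓ := by
  subst hab
  have hinv : ∀ s ∈ ({a, b} : Set H), φ (Multiplicative.ofAdd 1, 1) s = s⁻¹ := by
    rintro s (rfl | rfl) <;> assumption
  have hcentral : ⁅a, b⁆ ∈ Subgroup.center H := Subgroup.mem_center_of_closure_eq_top hgen <| by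
    rintro s (rfl | rfl)
    exacts [commutatorElement_eq_one_iff_mul_comm.mp hac,
      commutatorElement_eq_one_iff_mul_comm.mp hbc]
  have := Subgroup.normal_zpowers_of_mem_center hcentral
  have := isMulCommutative_quotient_zpowers_commutatorElement hgen
  have hfix : ∀ x : H, (∀ q, φ q x = x) ↔ x ∈ Subgroup.zpowers ⁅a, b⁆ := fun x => by
    rw [forall_apply_eq_self_iff_of_apply_snd_eq_one φ hva]
    refine ⟨MulAut.mem_of_apply_eq_self_of_eqOn_inv hgen hinv hodd hexp, ?_⟩
    rintro ⟨k, rfl⟩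
    rw [map_zpow, huc]
  have horder : orderOf ⁅a, b⁆ = ℓ := by
    have : Fact ℓ.Prime := ⟨hℓ⟩
    refine orderOf_eq_prime (hexp _) (commutatorElement_ne_one_of_sq_lt_natCard hgen hℓ.pos hexp ?_)
    rw [Nat.card_eq_fintype_card, hcard]
    exact Nat.pow_lt_pow_right hℓ.one_lt (by norm_num)
  have hP : ∀ q : Multiplicative (ZMod 2) × Multiplicative (ZMod 2), q ^ 2 = 1 := by decide
  obtain ⟨y, hy, hyorder⟩ := SemidirectProduct.pPrimePart_abelianization_normalizer_range_inr
    hP (horder ▸ hodd.coprime_two_left.symm) hfix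
  refine ⟨pPrimePart_eq_bot_of_forall_pow_eq_one
    (SemidirectProduct.abelianization_pow_eq_one
      (SemidirectProduct.abelianization_of_inl_eq_one hgen hinv hodd hexp) hP), ?_, ?_⟩
  · exact hy ▸ inferInstance
  · rw [hy, Nat.card_zpowers, hyorder, horder]

/-- With `G = H ⋊ P` (`H` extraspecial of order `ℓ³` and exponent `ℓ`,
`P ≅ C2 × C2` acting with `v` trivial and `u` inverting `a` and `b`), the `2'`-part of
the abelianization of `G` is trivial, while the `2'`-part of the abelianization of
`N_G(P) = Z(H) × P` is cyclic of order `ℓ`. -/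
theorem pPrimePart_abelianization_extraspecial_semidirect
    (ℓ : ℕ) (hℓ : ℓ.Prime) (hodd : Odd ℓ)
    (H : Type u) [Group H] [Fintype H] (a b c : H)
    (hcard : Fintype.card H = ℓ ^ 3)
    (ha : a ^ ℓ = 1) (hb : b ^ ℓ = 1) (hc : c ^ ℓ = 1)
    (hab : ⁅a, b⁆ = c) (hac : ⁅a, c⁆ = 1) (hbc : ⁅b, c⁆ = 1)
    (hgen : Subgroup.closure {a, b} = (⊤ : Subgroup H))
    (hexp : ∀ x : H, x ^ ℓ = 1)
    (φ : (Multiplicative (ZMod 2) × Multiplicative (ZMod 2)) →* MulAut H)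
    (hva : φ (1, Multiplicative.ofAdd 1) = 1)
    (hua : φ (Multiplicative.ofAdd 1, 1) a = a⁻¹)
    (hub : φ (Multiplicative.ofAdd 1, 1) b = b⁻¹)
    (huc : φ (Multiplicative.ofAdd 1, 1) c = c) :
    pPrimePart
        (Abelianization (H ⋊[φ] (Multiplicative (ZMod 2) × Multiplicative (ZMod 2)))) 2 =
      ⊥ ∧
    IsCyclic
      (pPrimePart
        (Abelianization
          (Subgroup.normalizer ((SemidirectProduct.inr :
              (Multiplicative (ZMod 2) × Multiplicative (ZMod 2)) →*
                H ⋊[φ] (Multiplicative (ZMod 2) × Multiplicative (ZMod 2))).range :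
              Set (H ⋊[φ] (Multiplicative (ZMod 2) × Multiplicative (ZMod 2))))))
        2) ∧
    Nat.card
      (pPrimePart
        (Abelianization
          (Subgroup.normalizer ((SemidirectProduct.inr :
              (Multiplicative (ZMod 2) × Multiplicative (ZMod 2)) →*
                H ⋊[φ] (Multiplicative (ZMod 2) × Multiplicative (ZMod 2))).range :
              Set (H ⋊[φ] (Multiplicative (ZMod 2) × Multiplicative (ZMod 2))))))
        2) = ℓ :=
  pPrimePart_abelianization_extraspecial_semidirect_general ℓ hℓ hodd H a b c hcard hab hac hbc hgen
    hexp φ hva hua hub huc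
end
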